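/- Let ψ : ℝ^{K-1} → ℝ be differentiable and satisfy the following lower exponential-tail bound: there exist u_- ∈ ℝ and c > 0 such that whenever min_j u_j > u_-, for every i one has -∂ψ/∂u_i(u) ≥ c(1 - Σ_j exp(-u_j)) exp(-u_i). Suppose additionally ψ is convex and symmetric. If (u^t)_{t≥1} is a sequence in ℝ^{K-1} with ∇ψ(u^t) → 0 as t → ∞, then for every coordinate j ∈ [K-1], u^t_j → ∞. -/

import Mathlib

/-!
Write `∂ᵢψ(x)` for `fderiv ℝ ψ x (Pi.single i 1)`. For convex symmetric `ψ` the partial derivatives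
are ordered like the coordinates: if `x i < x k`, swapping the two coordinates moves `x` along
`eᵢ - eₖ` without changing `ψ`, so the gradient inequality gives `∂ᵢψ ≤ ∂ₖψ`. Hence, for `i`
minimising `x`, raising all coordinates below `C` up to `C` can only increase `∂ᵢψ`: along the
raising direction `d ≥ 0` the directional derivative is at least `(∑ d) ∂ᵢψ` before and exactly
`(∑ d) ∂ᵢψ` after, when all moved coordinates equal `C`. At the raised point every coordinate is
`≥ C`, so for large `C` the tail bound gives `∂ᵢψ ≤ -(c/2) e^{-C}`. A coordinate of `uᵗ` that stays
below `C` would thus keep some partial derivative away from `0`.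
-/

open Filter Real

section ConvexGradient

variable {E : Type*} [NormedAddCommGroup E] [NormedSpace ℝ E] {f : E → ℝ}

lemma ConvexOn.comp_add_smul (hf : ConvexOn ℝ Set.univ f) (x v : E) :
    ConvexOn ℝ Set.univ (fun s : ℝ => f (x + s • v)) := by
  have hline : (fun s : ℝ => f (x + s • v)) = f ∘ AffineMap.lineMap x (x + v) := by
    funext s
    simp [AffineMap.lineMap_apply, add_comm]
  rw [hline]
  simpa using hf.comp_affineMap (AffineMap.lineMap x (x + v))

lemma ConvexOn.fderiv_apply_le_sub (hf : ConvexOn ℝ Set.univ f) {x : E}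
    (hx : DifferentiableAt ℝ f x) (d : E) :
    fderiv ℝ f x d ≤ f (x + d) - f x := by
  have hpath : HasDerivAt (fun s : ℝ => x + s • d) d 0 := by
    simpa using ((hasDerivAt_id (0 : ℝ)).smul_const d).const_add x
  have hfx : HasFDerivAt f (fderiv ℝ f x) (x + (0 : ℝ) • d) := by simpa using hx.hasFDerivAt
  have hline : HasDerivAt (fun s : ℝ => f (x + s • d)) (fderiv ℝ f x d) 0 :=
    hfx.comp_hasDerivAt 0 hpath
  simpa [slope_def_field] using
    (hf.comp_add_smul x d).le_slope_of_hasDerivAt trivial trivial zero_lt_one hline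

lemma ConvexOn.fderiv_apply_le_fderiv_add_apply (hf : ConvexOn ℝ Set.univ f)
    (hdiff : Differentiable ℝ f) (x d : E) :
    fderiv ℝ f x d ≤ fderiv ℝ f (x + d) d := by
  have hx := hf.fderiv_apply_le_sub (hdiff x) d
  have hxd := hf.fderiv_apply_le_sub (hdiff (x + d)) (-d)
  rw [map_neg, add_neg_cancel_right] at hxd
  linarith

end ConvexGradient

section Symmetric

variable {ι : Type*} [Fintype ι] {ψ : (ι → ℝ) → ℝ}

lemma fderiv_comp_perm (hdiff : Differentiable ℝ ψ)
    (hsym : ∀ (σ : Equiv.Perm ι) (u : ι → ℝ), ψ (u ∘ σ) = ψ u)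
    (σ : Equiv.Perm ι) (x w : ι → ℝ) :
    fderiv ℝ ψ (x ∘ σ) (w ∘ σ) = fderiv ℝ ψ x w := by
  let L : (ι → ℝ) →L[ℝ] (ι → ℝ) := LinearMap.toContinuousLinearMap (LinearMap.funLeft ℝ ℝ σ)
  have hcomp : ψ ∘ L = ψ := funext (hsym σ)
  have hchain := (hdiff (L x)).hasFDerivAt.comp x L.hasFDerivAt
  rw [hcomp] at hchain
  rw [hchain.fderiv]
  rfl

variable [DecidableEq ι]

lemma fderiv_apply_eq_sum (x d : ι → ℝ) :
    fderiv ℝ ψ x d = ∑ k, d k * fderiv ℝ ψ x (Pi.single k 1) := by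
  conv_lhs => rw [← Finset.univ_sum_single d]
  refine (map_sum _ _ _).trans (Finset.sum_congr rfl fun k _ => ?_)
  rw [← smul_eq_mul, ← map_smul, ← Pi.single_smul, smul_eq_mul, mul_one]

lemma fderiv_single_eq_of_eq (hdiff : Differentiable ℝ ψ)
    (hsym : ∀ (σ : Equiv.Perm ι) (u : ι → ℝ), ψ (u ∘ σ) = ψ u)
    {x : ι → ℝ} {i k : ι} (h : x i = x k) :
    fderiv ℝ ψ x (Pi.single i 1) = fderiv ℝ ψ x (Pi.single k 1) := by
  have hx : x ∘ Equiv.swap i k = x := by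
    rw [Equiv.comp_swap_eq_update]
    grind
  have hsingle : Pi.single k (1 : ℝ) ∘ Equiv.swap i k = Pi.single i 1 := by
    rw [Pi.single_comp_equiv, Equiv.symm_swap, Equiv.swap_apply_right]
  have hperm := fderiv_comp_perm hdiff hsym (Equiv.swap i k) x (Pi.single k 1)
  rwa [hx, hsingle] at hperm

lemma fderiv_single_le_of_le (hdiff : Differentiable ℝ ψ) (hconv : ConvexOn ℝ Set.univ ψ)
    (hsym : ∀ (σ : Equiv.Perm ι) (u : ι → ℝ), ψ (u ∘ σ) = ψ u)
    {x : ι → ℝ} {i k : ι} (h : x i ≤ x k) :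
    fderiv ℝ ψ x (Pi.single i 1) ≤ fderiv ℝ ψ x (Pi.single k 1) := by
  rcases h.eq_or_lt with heq | hlt
  · exact (fderiv_single_eq_of_eq hdiff hsym heq).le
  have hik : i ≠ k := fun hik => hlt.ne (congrArg x hik)
  have hswap : x + (x k - x i) • (Pi.single i 1 - Pi.single k 1) = x ∘ Equiv.swap i k := by
    rw [Equiv.comp_swap_eq_update]
    ext m
    simp only [Pi.add_apply, Pi.smul_apply, Pi.sub_apply, Pi.single_apply, smul_eq_mul,
      Function.update_apply]
    grind
  have hgrad := hconv.fderiv_apply_le_sub (hdiff x) ((x k - x i) • (Pi.single i 1 - Pi.single k 1))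
  rw [hswap, hsym, sub_self, map_smul, map_sub, smul_eq_mul] at hgrad
  nlinarith

lemma fderiv_single_le_fderiv_max_single (hdiff : Differentiable ℝ ψ)
    (hconv : ConvexOn ℝ Set.univ ψ)
    (hsym : ∀ (σ : Equiv.Perm ι) (u : ι → ℝ), ψ (u ∘ σ) = ψ u)
    (x : ι → ℝ) (C : ℝ) {i : ι} (hi : ∀ k, x i ≤ x k) :
    fderiv ℝ ψ x (Pi.single i 1) ≤ fderiv ℝ ψ (fun k => max (x k) C) (Pi.single i 1) := by
  set v : ι → ℝ := fun k => max (x k) C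
  rcases le_or_gt C (x i) with hCi | hiC
  · have hv : v = x := funext fun k => max_eq_left (hCi.trans (hi k))
    rw [hv]
  set d : ι → ℝ := v - x
  have hd : ∀ k, 0 ≤ d k := fun k => sub_nonneg.2 (le_max_left _ _)
  have hsum_pos : 0 < ∑ k, d k :=
    (sub_pos.2 (hiC.trans_le (le_max_right _ _))).trans_le
      (Finset.single_le_sum (fun k _ => hd k) (Finset.mem_univ i))
  have hat_x : (∑ k, d k) * fderiv ℝ ψ x (Pi.single i 1) ≤ fderiv ℝ ψ x d := by
    rw [fderiv_apply_eq_sum x d, Finset.sum_mul]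
    exact Finset.sum_le_sum fun k _ =>
      mul_le_mul_of_nonneg_left (fderiv_single_le_of_le hdiff hconv hsym (hi k)) (hd k)
  -- every coordinate that moved now equals `C = v i`
  have hat_v : fderiv ℝ ψ v d = (∑ k, d k) * fderiv ℝ ψ v (Pi.single i 1) := by
    rw [fderiv_apply_eq_sum v d, Finset.sum_mul]
    refine Finset.sum_congr rfl fun k _ => ?_
    rcases le_or_gt (x k) C with hkC | hkC
    · have hvk : v k = v i := by simp only [v, max_eq_right hkC, max_eq_right hiC.le]
      rw [fderiv_single_eq_of_eq hdiff hsym hvk]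
    · simp [d, v, max_eq_left hkC.le]
  have hmono := hconv.fderiv_apply_le_fderiv_add_apply hdiff x d
  rw [add_sub_cancel] at hmono
  exact le_of_mul_le_mul_left (hat_x.trans (hmono.trans hat_v.le)) hsum_pos

lemma exists_fderiv_single_le_neg_of_le (hdiff : Differentiable ℝ ψ)
    (hconv : ConvexOn ℝ Set.univ ψ)
    (hsym : ∀ (σ : Equiv.Perm ι) (u : ι → ℝ), ψ (u ∘ σ) = ψ u)
    {um c : ℝ} (hc : 0 ≤ c)
    (htail : ∀ u : ι → ℝ, (∀ j, um < u j) → ∀ i,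
      c * (1 - ∑ j, exp (-(u j))) * exp (-(u i)) ≤ -(fderiv ℝ ψ u (Pi.single i 1)))
    {C : ℝ} (hum : um < C) (hC : Fintype.card ι * exp (-C) ≤ 1 / 2)
    {x : ι → ℝ} {j : ι} (hj : x j ≤ C) :
    ∃ i, fderiv ℝ ψ x (Pi.single i 1) ≤ -(c / 2 * exp (-C)) := by
  have : Nonempty ι := ⟨j⟩
  obtain ⟨i, hi⟩ := Finite.exists_min x
  refine ⟨i, (fderiv_single_le_fderiv_max_single hdiff hconv hsym x C hi).trans ?_⟩
  set v : ι → ℝ := fun k => max (x k) C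
  have hvC : ∀ k, C ≤ v k := fun k => le_max_right _ _
  have hvi : v i = C := max_eq_right ((hi j).trans hj)
  have hsum : ∑ k, exp (-(v k)) ≤ 1 / 2 :=
    calc ∑ k, exp (-(v k)) ≤ Finset.univ.card • exp (-C) :=
          Finset.sum_le_card_nsmul _ _ _ fun k _ => exp_le_exp.2 (neg_le_neg (hvC k))
      _ = Fintype.card ι * exp (-C) := by rw [Finset.card_univ, nsmul_eq_mul]
      _ ≤ 1 / 2 := hC
  have hbound := htail v (fun k => hum.trans_le (hvC k)) i
  rw [hvi] at hbound
  nlinarith [mul_nonneg (mul_nonneg hc (sub_nonneg.2 hsum)) (exp_pos (-C)).le]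

end Symmetric

theorem stmt17_general (K : ℕ)
    (ψ : (Fin (K-1) → ℝ) → ℝ)
    (hdiff : Differentiable ℝ ψ)
    (hconv : ConvexOn ℝ Set.univ ψ)
    (hsym : ∀ (σ : Equiv.Perm (Fin (K-1))) (u : Fin (K-1) → ℝ), ψ (u ∘ σ) = ψ u)
    (um c : ℝ) (hc : 0 < c)
    (htail : ∀ u : Fin (K-1) → ℝ, (∀ j, um < u j) → ∀ i,
      c * (1 - ∑ j, Real.exp (-(u j))) * Real.exp (-(u i))
        ≤ -(fderiv ℝ ψ u (Pi.single i 1)))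
    (u : ℕ → Fin (K-1) → ℝ)
    (hgrad : ∀ i, Filter.Tendsto (fun t => fderiv ℝ ψ (u t) (Pi.single i 1))
      Filter.atTop (nhds 0)) :
    ∀ j, Filter.Tendsto (fun t => u t j) Filter.atTop Filter.atTop := by
  intro j
  rw [tendsto_atTop]
  intro b
  obtain ⟨C, hbC, hum, hC⟩ :
      ∃ C, b ≤ C ∧ um < C ∧ Fintype.card (Fin (K - 1)) * exp (-C) ≤ 1 / 2 := by
    have hlim : Tendsto (fun C => Fintype.card (Fin (K - 1)) * exp (-C)) atTop (nhds 0) := by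
      simpa using tendsto_exp_neg_atTop_nhds_zero.const_mul (Fintype.card (Fin (K - 1)) : ℝ)
    exact ((eventually_ge_atTop b).and ((eventually_gt_atTop um).and
      (hlim.eventually (Iic_mem_nhds (by norm_num))))).exists
  have hδ : 0 < c / 2 * exp (-C) := by positivity
  have hnear : ∀ᶠ t in atTop, ∀ i, -(c / 2 * exp (-C)) < fderiv ℝ ψ (u t) (Pi.single i 1) :=
    eventually_all.2 fun i => (hgrad i).eventually (Ioi_mem_nhds (neg_lt_zero.2 hδ))
  filter_upwards [hnear] with t hnear_t
  by_contra! hlt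
  obtain ⟨i, hi⟩ := exists_fderiv_single_le_neg_of_le hdiff hconv hsym hc.le htail hum hC
    (hlt.trans_le hbC).le
  exact (hnear_t i).not_ge hi

/-- If a convex, symmetric, differentiable template satisfies the lower exponential-tail
bound and the gradients along a sequence tend to zero, then every coordinate of the
sequence tends to infinity. -/
theorem stmt17 (K : ℕ) (hK : 2 ≤ K)
    (ψ : (Fin (K-1) → ℝ) → ℝ)
    (hdiff : Differentiable ℝ ψ)
    (hconv : ConvexOn ℝ Set.univ ψ)
    (hsym : ∀ (σ : Equiv.Perm (Fin (K-1))) (u : Fin (K-1) → ℝ), ψ (u ∘ σ) = ψ u)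
    (um c : ℝ) (hc : 0 < c)
    (htail : ∀ u : Fin (K-1) → ℝ, (∀ j, um < u j) → ∀ i,
      c * (1 - ∑ j, Real.exp (-(u j))) * Real.exp (-(u i))
        ≤ -(fderiv ℝ ψ u (Pi.single i 1)))
    (u : ℕ → Fin (K-1) → ℝ)
    (hgrad : ∀ i, Filter.Tendsto (fun t => fderiv ℝ ψ (u t) (Pi.single i 1))
      Filter.atTop (nhds 0)) :
    ∀ j, Filter.Tendsto (fun t => u t j) Filter.atTop Filter.atTop :=
  stmt17_general K ψ hdiff hconv hsym um c hc htail u hgrad
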